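/- Let a>0, α<0 and p∈[2,∞]. Let κ₁ be the unique positive solution of 2κ+α = −α·exp(−2κa). For λ>κ₁ define the operator R_λ on L^p(ℝ) by (R_λ u)(x) = (λ²−κ₁²)·∫_ℝ K(x,y;iλ)·u(y) dy. Then there exists a constant C>0, independent of λ, such that ‖R_λ u‖_{L^p} ≤ C·‖u‖_{L^p} for all λ>κ₁ and all u∈L^p(ℝ). -/

import Mathlib

open Complex MeasureTheory Filter Topology
open scoped ENNReal

noncomputable section

/-- `L1(x,y;k) = −α(2k+iα)·exp(ik|x+a|)·exp(ik|y+a|)`. -/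
def L1 (a α x y : ℝ) (k : ℂ) : ℂ :=
  -(α : ℂ) * (2 * k + I * α) * Complex.exp (I * k * (|x + a| : ℝ)) *
    Complex.exp (I * k * (|y + a| : ℝ))

/-- `L2(x,y;k) = iα²·exp(2ika)·exp(ik|x+a|)·exp(ik|y−a|)`. -/
def L2 (a α x y : ℝ) (k : ℂ) : ℂ :=
  I * (α : ℂ) ^ 2 * Complex.exp (2 * I * k * a) * Complex.exp (I * k * (|x + a| : ℝ)) *
    Complex.exp (I * k * (|y - a| : ℝ))

/-- `f(x,y;k) = L1 + L2 + L3 + L4`, with `L3(x,y;k)=L2(−x,−y;k)` and `L4(x,y;k)=L1(−x,−y;k)`. -/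
def fker (a α x y : ℝ) (k : ℂ) : ℂ :=
  L1 a α x y k + L2 a α x y k + L2 a α (-x) (-y) k + L1 a α (-x) (-y) k

/-- `D(k) = (2k+iα)² + α²·exp(4ika)`. -/
def Dden (a α : ℝ) (k : ℂ) : ℂ :=
  (2 * k + I * α) ^ 2 + (α : ℂ) ^ 2 * Complex.exp (4 * I * k * a)

/-- `U0(t;x,y) = (4πit)^{−1/2}·exp(i|x−y|²/(4t))`, principal branch. -/
def U0 (t x y : ℝ) : ℂ :=
  (4 * Real.pi * I * t : ℂ) ^ (-(1 / 2 : ℂ)) * Complex.exp (I * (|x - y| : ℝ) ^ 2 / (4 * t))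

/-- `K0(x,y;k) = (i/2k)·exp(ik|x−y|)`. -/
def K0 (x y : ℝ) (k : ℂ) : ℂ := I / (2 * k) * Complex.exp (I * k * (|x - y| : ℝ))

/-- The resolvent kernel `K(x,y;k) = K0(x,y;k) − (L1+L2+L3+L4)(x,y;k)/(2k·D(k))`. -/
def Kker (a α x y : ℝ) (k : ℂ) : ℂ :=
  K0 x y k - fker a α x y k / (2 * k * Dden a α k)

/-!
For `λ > κ₁` the kernel `(λ² - κ₁²) K(x, y; iλ)` is bounded by `C λ e^{-λ|x-y|}` with `C`
independent of `λ`. For the free part `K₀` this is `|K₀| = e^{-λ|x-y|} / (2λ)`; in the remaining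
part the zero of `D(iλ)` at `λ = κ₁` is cancelled by the factor `λ - κ₁` of the prefactor, because
`-D(iλ) ≥ 2 (λ - κ₁)(2κ₁ + α)`, and each `L_j(x, y; iλ)` decays like `e^{-λ|x-y|}`. Since
`λ e^{-λ|t|}` has integral `2` for every `λ`, the Schur test bounds `R_λ` on every `Lᵖ`,
`1 ≤ p ≤ ∞`, by `2C`.
-/

section SchurTest

variable {X Y : Type*} [MeasurableSpace X] [MeasurableSpace Y] {μ : Measure X} {ν : Measure Y}

/-- Hölder's inequality for `k ^ (1 - 1/p)` and `(k f ^ p) ^ (1/p)`. -/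
theorem ENNReal.rpow_lintegral_mul_le {k f : Y → ℝ≥0∞} (hk : AEMeasurable k ν)
    (hf : AEMeasurable f ν) {p : ℝ} (hp : 1 ≤ p) :
    (∫⁻ y, k y * f y ∂ν) ^ p ≤ (∫⁻ y, k y ∂ν) ^ (p - 1) * ∫⁻ y, k y * f y ^ p ∂ν := by
  have hp0 : 0 < p := one_pos.trans_le hp
  have hsplit : ∀ y, k y * f y = k y ^ (1 - p⁻¹) * (k y * f y ^ p) ^ p⁻¹ := fun y => by
    rw [ENNReal.mul_rpow_of_nonneg _ _ (by positivity), ← ENNReal.rpow_mul,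
      mul_inv_cancel₀ hp0.ne', ENNReal.rpow_one, ← mul_assoc,
      ← ENNReal.rpow_add_of_nonneg _ _ (sub_nonneg.2 (inv_le_one_of_one_le₀ hp)) (by positivity),
      sub_add_cancel, ENNReal.rpow_one]
  calc (∫⁻ y, k y * f y ∂ν) ^ p
      ≤ ((∫⁻ y, k y ∂ν) ^ (1 - p⁻¹) * (∫⁻ y, k y * f y ^ p ∂ν) ^ p⁻¹) ^ p := by
        simp_rw [hsplit]
        gcongr
        exact ENNReal.lintegral_mul_norm_pow_le hk (hk.mul (hf.pow_const p))
          (sub_nonneg.2 (inv_le_one_of_one_le₀ hp)) (by positivity) (sub_add_cancel _ _)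
    _ = (∫⁻ y, k y ∂ν) ^ (p - 1) * ∫⁻ y, k y * f y ^ p ∂ν := by
        rw [ENNReal.mul_rpow_of_nonneg _ _ hp0.le, ← ENNReal.rpow_mul, ← ENNReal.rpow_mul,
          inv_mul_cancel₀ hp0.ne', ENNReal.rpow_one, sub_mul, one_mul, inv_mul_cancel₀ hp0.ne']

theorem lintegral_rpow_lintegral_mul_le [SFinite μ] [SFinite ν] {k : X → Y → ℝ≥0∞}
    (hk : Measurable (Function.uncurry k)) {M : ℝ≥0∞} (hrow : ∀ x, ∫⁻ y, k x y ∂ν ≤ M)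
    (hcol : ∀ y, ∫⁻ x, k x y ∂μ ≤ M) {f : Y → ℝ≥0∞} (hf : Measurable f) {p : ℝ}
    (hp : 1 ≤ p) :
    ∫⁻ x, (∫⁻ y, k x y * f y ∂ν) ^ p ∂μ ≤ M ^ p * ∫⁻ y, f y ^ p ∂ν := by
  calc ∫⁻ x, (∫⁻ y, k x y * f y ∂ν) ^ p ∂μ
      ≤ ∫⁻ x, M ^ (p - 1) * ∫⁻ y, k x y * f y ^ p ∂ν ∂μ := by
        refine lintegral_mono fun x => ?_
        refine (ENNReal.rpow_lintegral_mul_le hk.of_uncurry_left.aemeasurable hf.aemeasurable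
          hp).trans ?_
        gcongr
        exact hrow x
    _ = M ^ (p - 1) * ∫⁻ y, (∫⁻ x, k x y ∂μ) * f y ^ p ∂ν := by
        have hprod : Measurable fun z : X × Y => k z.1 z.2 * f z.2 ^ p :=
          hk.mul ((hf.comp measurable_snd).pow_const p)
        rw [lintegral_const_mul _ hprod.lintegral_prod_right',
          lintegral_lintegral_swap hprod.aemeasurable]
        simp_rw [lintegral_mul_const _ hk.of_uncurry_right]
    _ ≤ M ^ (p - 1) * ∫⁻ y, M * f y ^ p ∂ν := by
        gcongr with y
        exact hcol y
    _ = M ^ p * ∫⁻ y, f y ^ p ∂ν := by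
        rw [lintegral_const_mul _ (hf.pow_const p), ← mul_assoc]
        nth_rw 2 [← ENNReal.rpow_one M]
        rw [← ENNReal.rpow_add_of_nonneg _ _ (sub_nonneg.2 hp) zero_le_one, sub_add_cancel]

variable {𝕜 : Type*} [RCLike 𝕜]

theorem enorm_integral_mul_le_lintegral {K : Y → 𝕜} {k : Y → ℝ≥0∞} (hK : ∀ y, ‖K y‖ₑ ≤ k y)
    (u : Y → 𝕜) : ‖∫ y, K y * u y ∂ν‖ₑ ≤ ∫⁻ y, k y * ‖u y‖ₑ ∂ν :=
  (enorm_integral_le_lintegral_enorm _).trans <|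
    lintegral_mono fun y => by rw [enorm_mul]; gcongr; exact hK y

/-- The Schur test. -/
theorem eLpNorm_integral_mul_le [SFinite μ] [SFinite ν] {k : X → Y → ℝ≥0∞} {M : ℝ≥0∞}
    {K : X → Y → 𝕜} (hk : Measurable (Function.uncurry k))
    (hrow : ∀ x, ∫⁻ y, k x y ∂ν ≤ M) (hcol : ∀ y, ∫⁻ x, k x y ∂μ ≤ M)
    (hK : ∀ x y, ‖K x y‖ₑ ≤ k x y) {p : ℝ≥0∞} (hp : 1 ≤ p) {u : Y → 𝕜}
    (hu : AEStronglyMeasurable u ν) :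
    eLpNorm (fun x => ∫ y, K x y * u y ∂ν) p μ ≤ M * eLpNorm u p ν := by
  obtain ⟨v, hv, huv⟩ := hu
  have hTv : (fun x => ∫ y, K x y * u y ∂ν) = fun x => ∫ y, K x y * v y ∂ν :=
    funext fun x => integral_congr_ae (huv.mono fun y hy => by simp only [hy])
  rw [hTv, eLpNorm_congr_ae huv]
  have hbound x := enorm_integral_mul_le_lintegral (ν := ν) (hK x) v
  rcases eq_or_ne p ∞ with rfl | hptop
  · rw [eLpNorm_exponent_top, eLpNorm_exponent_top]
    refine essSup_le_of_ae_le _ (ae_of_all _ fun x => (hbound x).trans ?_)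
    calc ∫⁻ y, k x y * ‖v y‖ₑ ∂ν ≤ ∫⁻ y, k x y * eLpNormEssSup v ν ∂ν :=
          lintegral_mono_ae ((enorm_ae_le_eLpNormEssSup v ν).mono fun y hy => by gcongr)
      _ ≤ M * eLpNormEssSup v ν := by
          rw [lintegral_mul_const _ hk.of_uncurry_left]
          gcongr
          exact hrow x
  · have hp0 : p ≠ 0 := (one_pos.trans_le hp).ne'
    have hpr : 1 ≤ p.toReal := by
      simpa using ENNReal.toReal_mono hptop hp
    rw [eLpNorm_eq_lintegral_rpow_enorm_toReal hp0 hptop,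
      eLpNorm_eq_lintegral_rpow_enorm_toReal hp0 hptop]
    calc (∫⁻ x, ‖∫ y, K x y * v y ∂ν‖ₑ ^ p.toReal ∂μ) ^ (1 / p.toReal)
        ≤ (M ^ p.toReal * ∫⁻ y, ‖v y‖ₑ ^ p.toReal ∂ν) ^ (1 / p.toReal) := by
          gcongr
          refine (lintegral_mono fun x => ?_).trans
            (lintegral_rpow_lintegral_mul_le hk hrow hcol hv.enorm hpr)
          gcongr
          exact hbound x
      _ = M * (∫⁻ y, ‖v y‖ₑ ^ p.toReal ∂ν) ^ (1 / p.toReal) := by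
          rw [ENNReal.mul_rpow_of_nonneg _ _ (by positivity), ← ENNReal.rpow_mul,
            mul_one_div_cancel (by positivity), ENNReal.rpow_one]

theorem eLpNorm_integral_mul_le_of_enorm_le_sub {G : Type*} [MeasurableSpace G] [AddCommGroup G]
    [MeasurableAdd₂ G] [MeasurableNeg G] {μ : Measure G} [SFinite μ] [μ.IsAddLeftInvariant]
    [μ.IsNegInvariant] {g : G → ℝ≥0∞} (hg : Measurable g) {K : G → G → 𝕜}
    (hK : ∀ x y, ‖K x y‖ₑ ≤ g (x - y)) {p : ℝ≥0∞} (hp : 1 ≤ p) {u : G → 𝕜}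
    (hu : AEStronglyMeasurable u μ) :
    eLpNorm (fun x => ∫ y, K x y * u y ∂μ) p μ ≤ (∫⁻ t, g t ∂μ) * eLpNorm u p μ :=
  eLpNorm_integral_mul_le (k := fun x y => g (x - y)) (hg.comp measurable_sub)
    (fun x => (lintegral_sub_left_eq_self g x).le) (fun y => (lintegral_sub_right_eq_self g y).le)
    hK hp hu

end SchurTest

theorem integral_exp_neg_mul_abs {lam : ℝ} (hlam : 0 < lam) :
    ∫ t, Real.exp (-(lam * |t|)) = 2 / lam := by
  rw [integral_comp_abs (f := fun t => Real.exp (-(lam * t)))]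
  simp_rw [← neg_mul, integral_exp_mul_Ioi (neg_neg_of_pos hlam)]
  field_simp
  simp

theorem integrable_exp_neg_mul_abs {lam : ℝ} (hlam : 0 < lam) :
    Integrable fun t : ℝ => Real.exp (-(lam * |t|)) :=
  .of_integral_ne_zero (by rw [integral_exp_neg_mul_abs hlam]; positivity)

theorem eLpNorm_integral_mul_le_of_norm_le_exp {𝕜 : Type*} [RCLike 𝕜] {C lam : ℝ} (hC : 0 ≤ C)
    (hlam : 0 < lam) {K : ℝ → ℝ → 𝕜}
    (hK : ∀ x y, ‖K x y‖ ≤ C * lam * Real.exp (-(lam * |x - y|))) {p : ℝ≥0∞} (hp : 1 ≤ p)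
    {u : ℝ → 𝕜} (hu : AEStronglyMeasurable u) :
    eLpNorm (fun x => ∫ y, K x y * u y) p volume ≤ ENNReal.ofReal (2 * C) * eLpNorm u p volume := by
  set g : ℝ → ℝ := fun t => C * lam * Real.exp (-(lam * |t|))
  have hg : Continuous g := by fun_prop
  have hgint : ∫⁻ t, ENNReal.ofReal (g t) = ENNReal.ofReal (2 * C) := by
    rw [← ofReal_integral_eq_lintegral_ofReal ((integrable_exp_neg_mul_abs hlam).const_mul _)
      (ae_of_all _ fun t => by positivity), integral_const_mul, integral_exp_neg_mul_abs hlam]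
    congr 1
    field_simp
  rw [← hgint]
  refine eLpNorm_integral_mul_le_of_enorm_le_sub hg.measurable.ennreal_ofReal (fun x y => ?_) hp hu
  rw [← ofReal_norm]
  exact ENNReal.ofReal_le_ofReal (hK x y)

section ResolventKernel

variable {a α κ₁ lam : ℝ}

theorem two_mul_add_pos (hα : α < 0) (hκeq : 2 * κ₁ + α = -α * Real.exp (-2 * κ₁ * a)) :
    0 < 2 * κ₁ + α := by
  rw [hκeq]
  exact mul_pos (neg_pos.2 hα) (Real.exp_pos _)

theorem norm_two_mul_I_mul_add_I_mul (lam α : ℝ) : ‖2 * (I * lam) + I * α‖ = |2 * lam + α| := by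
  rw [show 2 * (I * lam) + I * α = ((2 * lam + α : ℝ) : ℂ) * I by push_cast; ring, norm_mul,
    Complex.norm_real, Complex.norm_I, mul_one, Real.norm_eq_abs]

theorem norm_L1_I_mul_le (x y : ℝ) (hlam : 0 ≤ lam) :
    ‖L1 a α x y (I * lam)‖ ≤ (2 * |α| * lam + α ^ 2) * Real.exp (-(lam * |x - y|)) := by
  have hxy : |x - y| ≤ |x + a| + |y + a| := by
    simpa only [add_sub_add_right_eq_sub] using abs_sub (x + a) (y + a)
  have hexp : Real.exp (-(lam * |x + a|)) * Real.exp (-(lam * |y + a|)) ≤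
      Real.exp (-(lam * |x - y|)) := by
    rw [← Real.exp_add, Real.exp_le_exp]; nlinarith
  have hcoef : |α| * |2 * lam + α| ≤ 2 * |α| * lam + α ^ 2 := by
    have := abs_add_le (2 * lam) α
    rw [abs_of_nonneg (by positivity : 0 ≤ 2 * lam)] at this
    nlinarith [abs_nonneg α, sq_abs α]
  simp only [L1, norm_mul, norm_neg, Complex.norm_real, Real.norm_eq_abs,
    norm_two_mul_I_mul_add_I_mul, Complex.norm_exp, mul_re, I_re, ofReal_re, zero_mul, I_im,
    ofReal_im, mul_zero, sub_self, mul_im, one_mul, zero_add, zero_sub, neg_mul, sub_zero]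
  rw [mul_assoc]
  gcongr

theorem norm_L2_I_mul_le (x y : ℝ) (ha : 0 ≤ a) (hlam : 0 ≤ lam) :
    ‖L2 a α x y (I * lam)‖ ≤ α ^ 2 * Real.exp (-(lam * |x - y|)) := by
  have hxy : |x - y| ≤ 2 * a + |x + a| + |y - a| := by
    rw [abs_le]
    constructor <;> linarith [le_abs_self (x + a), neg_abs_le (x + a), le_abs_self (y - a),
      neg_abs_le (y - a)]
  have hexp : Real.exp (-(2 * lam * a)) * Real.exp (-(lam * |x + a|)) *
      Real.exp (-(lam * |y - a|)) ≤ Real.exp (-(lam * |x - y|)) := by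
    rw [← Real.exp_add, ← Real.exp_add, Real.exp_le_exp]; nlinarith
  simp only [L2, norm_mul, norm_I, norm_pow, norm_real, Real.norm_eq_abs, sq_abs, one_mul,
    norm_exp, mul_re, re_ofNat, I_re, mul_zero, im_ofNat, I_im, mul_one, sub_self, ofReal_re,
    zero_mul, ofReal_im, mul_im, add_zero, zero_add, zero_sub, neg_mul]
  rw [mul_assoc, mul_assoc]
  gcongr
  simpa [mul_assoc] using hexp

theorem norm_fker_I_mul_le (x y : ℝ) (ha : 0 ≤ a) (hlam : 0 ≤ lam) :
    ‖fker a α x y (I * lam)‖ ≤ 4 * (|α| * lam + α ^ 2) * Real.exp (-(lam * |x - y|)) := by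
  have hneg : |-x - -y| = |x - y| := by rw [← abs_neg]; ring_nf
  have h1 := norm_L1_I_mul_le (a := a) (α := α) x y hlam
  have h2 := norm_L2_I_mul_le (a := a) (α := α) x y ha hlam
  have h3 := norm_L2_I_mul_le (a := a) (α := α) (-x) (-y) ha hlam
  have h4 := norm_L1_I_mul_le (a := a) (α := α) (-x) (-y) hlam
  rw [hneg] at h3 h4
  calc ‖fker a α x y (I * lam)‖ ≤ ‖L1 a α x y (I * lam)‖ + ‖L2 a α x y (I * lam)‖ +
        ‖L2 a α (-x) (-y) (I * lam)‖ + ‖L1 a α (-x) (-y) (I * lam)‖ := norm_add₄_le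
    _ ≤ _ := by linarith

theorem norm_K0_I_mul (x y : ℝ) (hlam : 0 < lam) :
    ‖K0 x y (I * lam)‖ = Real.exp (-(lam * |x - y|)) / (2 * lam) := by
  simp [K0, Complex.norm_exp, abs_of_pos hlam, div_eq_inv_mul, mul_comm]

theorem Dden_I_mul (a α lam : ℝ) :
    Dden a α (I * lam) = ((α ^ 2 * Real.exp (-(4 * lam * a)) - (2 * lam + α) ^ 2 : ℝ) : ℂ) := by
  rw [Dden, show (4 : ℂ) * I * (I * lam) * a = ((-(4 * lam * a) : ℝ) : ℂ) by
    push_cast; linear_combination (4 * lam * a : ℂ) * I_mul_I, ← Complex.ofReal_exp]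
  push_cast
  linear_combination (2 * (lam : ℂ) + α) ^ 2 * I_mul_I

/-- With `β = -α e^{-2λa}` one has `-D(iλ) = (2λ + α - β)(2λ + α + β)`, and `β ≤ 2κ₁ + α`
for `λ ≥ κ₁`. -/
theorem le_neg_Dden_I_mul (ha : 0 ≤ a) (hα : α ≤ 0)
    (hκeq : 2 * κ₁ + α = -α * Real.exp (-2 * κ₁ * a)) (hlam : κ₁ ≤ lam) :
    2 * (lam - κ₁) * (2 * κ₁ + α) ≤ (2 * lam + α) ^ 2 - α ^ 2 * Real.exp (-(4 * lam * a)) := by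
  set β := -α * Real.exp (-(2 * lam * a))
  have hβ0 : 0 ≤ β := mul_nonneg (neg_nonneg.2 hα) (Real.exp_pos _).le
  have hβ : β ≤ 2 * κ₁ + α := by
    rw [hκeq]
    exact mul_le_mul_of_nonneg_left (Real.exp_le_exp.2 (by nlinarith)) (neg_nonneg.2 hα)
  have hsq : α ^ 2 * Real.exp (-(4 * lam * a)) = β ^ 2 := by
    rw [mul_pow, neg_sq, sq (Real.exp _), ← Real.exp_add]; ring_nf
  have hc : 0 ≤ 2 * κ₁ + α := hβ0.trans hβ
  rw [hsq]
  nlinarith [mul_le_mul (by linarith : 2 * (lam - κ₁) ≤ 2 * lam + α - β)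
    (by linarith : 2 * κ₁ + α ≤ 2 * lam + α + β) hc (by linarith)]

theorem le_norm_two_mul_I_mul_Dden (ha : 0 ≤ a) (hα : α ≤ 0)
    (hκeq : 2 * κ₁ + α = -α * Real.exp (-2 * κ₁ * a)) (hlam₀ : 0 ≤ lam) (hlam : κ₁ ≤ lam) :
    4 * lam * (lam - κ₁) * (2 * κ₁ + α) ≤ ‖2 * (I * lam) * Dden a α (I * lam)‖ := by
  rw [norm_mul, Dden_I_mul, Complex.norm_real, Real.norm_eq_abs, abs_sub_comm]
  have h2 : ‖2 * (I * (lam : ℂ))‖ = 2 * lam := by simp [abs_of_nonneg hlam₀]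
  rw [h2]
  nlinarith [le_neg_Dden_I_mul ha hα hκeq hlam,
    le_abs_self ((2 * lam + α) ^ 2 - α ^ 2 * Real.exp (-(4 * lam * a)))]

theorem mul_norm_fker_div_le (ha : 0 ≤ a) (hα : α < 0) (hκ₁ : 0 < κ₁)
    (hκeq : 2 * κ₁ + α = -α * Real.exp (-2 * κ₁ * a)) (hlam : κ₁ < lam) (x y : ℝ) :
    (lam ^ 2 - κ₁ ^ 2) * ‖fker a α x y (I * lam) / (2 * (I * lam) * Dden a α (I * lam))‖ ≤
      2 * (|α| + α ^ 2 / κ₁) / (2 * κ₁ + α) * lam * Real.exp (-(lam * |x - y|)) := by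
  have hlam₀ : 0 < lam := hκ₁.trans hlam
  have hgap : 0 < lam - κ₁ := sub_pos.2 hlam
  have hc := two_mul_add_pos hα hκeq
  have hα2 : α ^ 2 ≤ α ^ 2 / κ₁ * lam := by
    rw [div_mul_eq_mul_div, le_div_iff₀ hκ₁]; nlinarith [sq_nonneg α]
  set E := Real.exp (-(lam * |x - y|))
  rw [norm_div]
  calc (lam ^ 2 - κ₁ ^ 2) * (‖fker a α x y (I * lam)‖ / ‖2 * (I * lam) * Dden a α (I * lam)‖)
      ≤ (lam ^ 2 - κ₁ ^ 2) *
          (4 * (|α| * lam + α ^ 2) * E / (4 * lam * (lam - κ₁) * (2 * κ₁ + α))) := by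
        gcongr
        · nlinarith
        · exact norm_fker_I_mul_le x y ha hlam₀.le
        · exact le_norm_two_mul_I_mul_Dden ha hα.le hκeq hlam₀.le hlam.le
    _ = (lam + κ₁) * (|α| * lam + α ^ 2) / (2 * κ₁ + α) / lam * E := by
        field_simp [hgap.ne']
        ring
    _ ≤ 2 * (|α| + α ^ 2 / κ₁) / (2 * κ₁ + α) * lam * E := by
        gcongr
        rw [div_le_iff₀ hlam₀, div_mul_eq_mul_div, div_mul_eq_mul_div,
          div_le_div_iff_of_pos_right hc]
        nlinarith [mul_le_mul (by linarith : lam + κ₁ ≤ 2 * lam)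
          (by nlinarith [abs_nonneg α] : |α| * lam + α ^ 2 ≤ (|α| + α ^ 2 / κ₁) * lam)
          (by positivity) (by positivity)]

theorem norm_mul_Kker_I_mul_le (ha : 0 ≤ a) (hα : α < 0) (hκ₁ : 0 < κ₁)
    (hκeq : 2 * κ₁ + α = -α * Real.exp (-2 * κ₁ * a)) (hlam : κ₁ < lam) (x y : ℝ) :
    ‖((lam : ℂ) ^ 2 - (κ₁ : ℂ) ^ 2) * Kker a α x y (I * lam)‖ ≤
      (1 + 2 * (|α| + α ^ 2 / κ₁) / (2 * κ₁ + α)) * lam * Real.exp (-(lam * |x - y|)) := by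
  have hlam₀ : 0 < lam := hκ₁.trans hlam
  have hpref : ‖(lam : ℂ) ^ 2 - (κ₁ : ℂ) ^ 2‖ = lam ^ 2 - κ₁ ^ 2 := by
    rw [← ofReal_pow, ← ofReal_pow, ← ofReal_sub, Complex.norm_real, Real.norm_eq_abs,
      abs_of_nonneg (by nlinarith)]
  have hfree : (lam ^ 2 - κ₁ ^ 2) * ‖K0 x y (I * lam)‖ ≤ lam * Real.exp (-(lam * |x - y|)) := by
    rw [norm_K0_I_mul x y hlam₀, mul_div_assoc', div_le_iff₀ (by positivity)]
    nlinarith [Real.exp_pos (-(lam * |x - y|))]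
  calc ‖((lam : ℂ) ^ 2 - (κ₁ : ℂ) ^ 2) * Kker a α x y (I * lam)‖
      ≤ (lam ^ 2 - κ₁ ^ 2) * ‖K0 x y (I * lam)‖ + (lam ^ 2 - κ₁ ^ 2) *
          ‖fker a α x y (I * lam) / (2 * (I * lam) * Dden a α (I * lam))‖ := by
        rw [Kker, mul_sub, ← hpref, ← norm_mul, ← norm_mul]
        exact norm_sub_le _ _
    _ ≤ _ := by linarith [mul_norm_fker_div_le ha hα hκ₁ hκeq hlam x y]

end ResolventKernel

/-- for `a>0`, `α<0` and `p∈[2,∞]`, with `κ₁` the unique positive solution of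
`2κ+α = −α·e^{−2κa}`, the operators `(R_λ u)(x) = (λ²−κ₁²)·∫ K(x,y;iλ)u(y)dy` are bounded
on `L^p(ℝ)` uniformly in `λ>κ₁`. -/
theorem stmt13 (a α : ℝ) (ha : 0 < a) (hα : α < 0) (p : ℝ≥0∞) (hp : 2 ≤ p)
    (κ₁ : ℝ) (hκ₁ : 0 < κ₁) (hκeq : 2 * κ₁ + α = -α * Real.exp (-2 * κ₁ * a)) :
    ∃ C > 0, ∀ lam : ℝ, κ₁ < lam → ∀ u : ℝ → ℂ, MemLp u p volume →
      eLpNorm (fun x : ℝ =>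
          ((lam : ℂ) ^ 2 - (κ₁ : ℂ) ^ 2) * ∫ y : ℝ, Kker a α x y (I * lam) * u y) p volume
        ≤ ENNReal.ofReal C * eLpNorm u p volume := by
  set C := 1 + 2 * (|α| + α ^ 2 / κ₁) / (2 * κ₁ + α)
  have hC : 0 < C := by
    have := div_nonneg (by positivity : 0 ≤ 2 * (|α| + α ^ 2 / κ₁)) (two_mul_add_pos hα hκeq).le
    linarith
  refine ⟨2 * C, by positivity, fun lam hlam u hu => ?_⟩
  simp_rw [← integral_const_mul, ← mul_assoc]
  exact eLpNorm_integral_mul_le_of_norm_le_exp hC.le (hκ₁.trans hlam)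
    (norm_mul_Kker_I_mul_le ha.le hα hκ₁ hκeq hlam) (one_le_two.trans hp)
    hu.aestronglyMeasurable
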